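/- If κ is a singular cardinal, then u(cf(κ)) ≤ u(κ). -/

import Mathlib

open Cardinal Set

universe u v

/-- An ultrafilter is uniform if all of its members have full cardinality. -/
def Uniform {α : Type u} (U : Ultrafilter α) : Prop := ∀ X ∈ U, #X = #α

/-- An ultrafilter `U` over `S` is `l`-decomposable if there is `f : S → l`
such that preimages of sets of size `< l` are not in `U`. -/
def Decomposable {S : Type u} (U : Ultrafilter S) (l : Cardinal.{v}) : Prop :=
  ∃ f : S → l.out, ∀ X : Set l.out, #X < l → f ⁻¹' X ∉ U

/-- The character of an ultrafilter: the least cardinality of a base. -/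
noncomputable def charU {α : Type u} (U : Ultrafilter α) : Cardinal.{u} :=
  sInf {c | ∃ B : Set (Set α), #B = c ∧ (∀ X ∈ B, X ∈ U) ∧ ∀ Y ∈ U, ∃ X ∈ B, X ⊆ Y}

/-- The ultrafilter number at a cardinal `κ`: the minimal character of a
uniform ultrafilter over (a set of size) `κ`. -/
noncomputable def uNumber (κ : Cardinal.{u}) : Cardinal.{u} :=
  sInf {c | ∃ U : Ultrafilter κ.out, Uniform U ∧ charU U = c}

/-- Every infinite type carries a uniform ultrafilter. -/
theorem exists_uniform {α : Type u} (hα : ℵ₀ ≤ #α) : ∃ U : Ultrafilter α, Uniform U := by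
  have h1 : (#(∅ : Set α)) < #α := by
    rw [mk_emptyCollection]
    exact (aleph0_pos).trans_le hα
  let F : Filter α := Filter.comk (fun s => #s < #α) h1
    (fun t ht s hs => (mk_le_mk_of_subset hs).trans_lt ht)
    (fun s hs t ht => (mk_union_le s t).trans_lt (add_lt_of_lt hα hs ht))
  have hmemF : ∀ s : Set α, s ∈ F ↔ #(sᶜ : Set α) < #α := fun s => Filter.mem_comk
  have : F.NeBot := by
    rw [Filter.neBot_iff]
    intro hbot
    have : (∅ : Set α) ∈ F := hbot ▸ Filter.mem_bot
    rw [hmemF, compl_empty, mk_univ] at this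
    exact lt_irrefl _ this
  obtain ⟨U, hU⟩ := Ultrafilter.exists_le F
  refine ⟨U, fun X hX => ?_⟩
  refine le_antisymm (mk_set_le X) (not_lt.1 fun hlt => ?_)
  have hXc : Xᶜ ∈ U := hU ((hmemF Xᶜ).2 (by rwa [compl_compl]))
  have : (∅ : Set α) ∈ U := by
    simpa using Filter.inter_mem hX hXc
  exact Filter.empty_notMem (U : Filter α) this

/-- The character of a pushforward is at most the character. -/
theorem charU_map_le {α : Type u} {β : Type u} (f : α → β) (U : Ultrafilter α) :
    charU (U.map f) ≤ charU U := by
  have hne : ({c | ∃ B : Set (Set α), #B = c ∧ (∀ X ∈ B, X ∈ U) ∧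
      ∀ Y ∈ U, ∃ X ∈ B, X ⊆ Y}).Nonempty :=
    ⟨_, {X | X ∈ U}, rfl, fun X hX => hX, fun Y hY => ⟨Y, hY, subset_rfl⟩⟩
  obtain ⟨B, hB, hBU, hBbase⟩ := csInf_mem hne
  have h1 : charU (U.map f) ≤ #((fun b => f '' b) '' B) := by
    refine csInf_le' ⟨(fun b => f '' b) '' B, rfl, ?_, ?_⟩
    · rintro Z ⟨b, hb, rfl⟩
      rw [Ultrafilter.mem_map]
      exact Filter.mem_of_superset (hBU b hb) (subset_preimage_image f b)
    · intro Y hY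
      rw [Ultrafilter.mem_map] at hY
      obtain ⟨b, hbB, hbsub⟩ := hBbase _ hY
      exact ⟨f '' b, ⟨b, hbB, rfl⟩,
        (image_mono hbsub).trans (image_preimage_subset f Y)⟩
  exact h1.trans (le_of_le_of_eq (mk_image_le) hB)

/-- If `κ` is singular then `u(cf κ) ≤ u(κ)`. -/
theorem stmt11 (κ : Cardinal.{u}) (hκ : ℵ₀ ≤ κ) (hsing : κ.ord.cof < κ) :
    uNumber κ.ord.cof ≤ uNumber κ := by
  set l := κ.ord.cof with hl
  -- get a uniform ultrafilter over κ.out of minimal character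
  have hκout : ℵ₀ ≤ #κ.out := by rw [mk_out]; exact hκ
  have hneκ : ({c | ∃ U : Ultrafilter κ.out, Uniform U ∧ charU U = c}).Nonempty := by
    obtain ⟨U, hU⟩ := exists_uniform hκout
    exact ⟨_, U, hU, rfl⟩
  obtain ⟨U, hUuni, hUchar⟩ := csInf_mem hneκ
  -- build the decomposition function
  have e : κ.out ≃ κ.ord.ToType := by
    refine Classical.choice (Cardinal.eq.1 ?_)
    rw [mk_out, mk_toType, card_ord]
  obtain ⟨S, hSub, hScard⟩ := Order.exists_cof_eq κ.ord.ToType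
  rw [Ordinal.cof_toType] at hScard
  have e2 : ↥S ≃ l.out := by
    refine Classical.choice (Cardinal.eq.1 ?_)
    rw [mk_out, hScard]
  have hg : ∀ x : κ.ord.ToType, ∃ s : ↥S, x ≤ (s : κ.ord.ToType) := by
    intro x
    obtain ⟨s, hsS, hs⟩ := hSub x
    exact ⟨⟨s, hsS⟩, hs⟩
  choose g hgle using hg
  set f : κ.out → l.out := fun x => e2 (g (e x)) with hf
  -- preimages of small sets are small
  have hsmall : ∀ X : Set l.out, #X < l → #(f ⁻¹' X) < κ := by
    intro X hX
    have hfp : f ⁻¹' X = e ⁻¹' (g ⁻¹' (e2 ⁻¹' X)) := rfl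
    set Y : Set ↥S := e2 ⁻¹' X with hY
    have hYcard : #Y < l := (mk_preimage_of_injective e2 X e2.injective).trans_lt hX
    have hunion : g ⁻¹' Y = ⋃ i ∈ Y, g ⁻¹' {i} := by
      ext x; simp
    have hfiber : ∀ i : ↥S, #(g ⁻¹' {i}) < κ := by
      intro i
      have h1 : g ⁻¹' {i} ⊆ Iic (i : κ.ord.ToType) := by
        intro x hx
        have := hgle x
        rw [mem_preimage, mem_singleton_iff] at hx
        rw [hx] at this
        exact this
      have h2 : Iic (i : κ.ord.ToType) = insert (i : κ.ord.ToType) (Iio _) :=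
        (Set.Iio_insert).symm
      have h3 : #(Iic (i : κ.ord.ToType)) ≤ #(Iio (i : κ.ord.ToType)) + 1 := by
        rw [h2]; exact mk_insert_le
      refine ((mk_le_mk_of_subset h1).trans h3).trans_lt ?_
      exact add_lt_of_lt hκ (mk_Iio_toType_ord_lt (c := κ) i) (one_lt_aleph0.trans_le hκ)
    have hbound : #(g ⁻¹' Y) < κ := by
      rw [hunion]
      refine (mk_biUnion_le (fun i : ↥S => g ⁻¹' {i}) Y).trans_lt ?_
      refine mul_lt_of_lt hκ (hYcard.trans hsing) ?_
      exact Ordinal.iSup_lt (f := fun i : ↥Y => #(g ⁻¹' {(i : ↥S)})) (hYcard) (fun i => hfiber _)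
    calc #(f ⁻¹' X) = #(e ⁻¹' (g ⁻¹' Y)) := by rw [hfp]
      _ ≤ #(g ⁻¹' Y) := mk_preimage_of_injective e _ e.injective
      _ < κ := hbound
  -- the pushforward ultrafilter is uniform over l.out
  have hdec : ∀ X : Set l.out, #X < l → f ⁻¹' X ∉ U := by
    intro X hX hmem
    have := hUuni _ hmem
    rw [mk_out] at this
    exact absurd this (hsmall X hX).ne
  have hVuni : Uniform (U.map f) := by
    intro X hX
    rw [Ultrafilter.mem_map] at hX
    have h1 : ¬ #X < l := fun h => hdec X h hX
    refine le_antisymm (mk_set_le X) ?_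
    rw [mk_out]
    exact not_lt.1 h1
  calc uNumber l ≤ charU (U.map f) := csInf_le' ⟨U.map f, hVuni, rfl⟩
    _ ≤ charU U := charU_map_le f U
    _ = uNumber κ := hUchar
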